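/- Let σ₀ > 0, δ > 0, L ∈ ℝ, L* = L + δ, and k ≥ −1 an integer. Let σ_{B_k}(x) = σ₀ β_k(x − L*) for L ≤ x < L*, where β_{−1}(z) = −1/z and, for k ≥ 0, β_k(z) = β_{−1}(z) − Σ_{j=0}^{k} (1/j!) β_{−1}^{(j)}(−δ)(z+δ)^j. Then the integral of σ_{B_k} over the layer diverges: ∫_L^{L*} σ_{B_k}(x) dx = +∞. -/
import Mathlib


open MeasureTheory

/-- The Bermúdez profile `β₋₁(z) = −1/z`. -/
noncomputable def betam1 : ℝ → ℝ := fun z => -1 / z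

/-- The regularized Bermúdez profile for integer `k ≥ −1`: for `k = −1` the sum is empty and
`β₋₁(z) = −1/z`; for `k ≥ 0`, `β_k(z) = β₋₁(z) − Σ_{j=0}^{k} (1/j!) β₋₁⁽ʲ⁾(−δ)(z+δ)^j`. -/
noncomputable def betak (δ : ℝ) (k : ℤ) : ℝ → ℝ := fun z =>
  -1 / z - ∑ j ∈ Finset.range (k + 1).toNat,
    (1 / (Nat.factorial j : ℝ)) * iteratedDeriv j betam1 (-δ) * (z + δ) ^ j

/-- Auxiliary: the lower Lebesgue integral of `c/(b-x)` over `Ioo a b` diverges. -/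
lemma aux_lintegral_inv_top (a b c : ℝ) (hab : a < b) (hc : 0 < c) :
    ∫⁻ x in Set.Ioo a b, ENNReal.ofReal (c * (b - x)⁻¹) = ⊤ := by
  by_contra h
  have hnn : 0 ≤ᵐ[volume.restrict (Set.Ioo a b)] fun x => c * (b - x)⁻¹ := by
    filter_upwards [ae_restrict_mem measurableSet_Ioo] with x hx
    exact mul_nonneg hc.le (inv_nonneg.2 (sub_nonneg.2 hx.2.le))
  have hmeas : AEStronglyMeasurable (fun x => c * (b - x)⁻¹)
      (volume.restrict (Set.Ioo a b)) :=
    (measurable_const.mul ((measurable_const.sub measurable_id).inv)).aestronglyMeasurable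
  have hint : IntegrableOn (fun x => c * (b - x)⁻¹) (Set.Ioo a b) :=
    ⟨hmeas, (hasFiniteIntegral_iff_ofReal hnn).2 (lt_top_iff_ne_top.2 h)⟩
  have hint2 : IntegrableOn (fun x => (x - b)⁻¹) (Set.Ioo a b) := by
    have h2 := hint.const_mul (-c⁻¹)
    have heq : (fun x => -c⁻¹ * (c * (b - x)⁻¹)) = fun x => (x - b)⁻¹ := by
      funext x
      rw [show -c⁻¹ * (c * (b - x)⁻¹) = -((c⁻¹ * c) * (b - x)⁻¹) by ring,
        inv_mul_cancel₀ hc.ne', one_mul, ← inv_neg, neg_sub]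
    rwa [heq] at h2
  have hint3 : IntegrableOn (fun x => (x - b)⁻¹) (Set.Ioc a b) := by
    rwa [IntegrableOn, ← Measure.restrict_congr_set Ioo_ae_eq_Ioc]
  have hii : IntervalIntegrable (fun x => (x - b)⁻¹) volume a b := by
    rw [intervalIntegrable_iff_integrableOn_Ioc_of_le hab.le]
    exact hint3
  rw [intervalIntegrable_sub_inv_iff] at hii
  rcases hii with h' | h'
  · exact hab.ne h'
  · exact h' Set.right_mem_uIcc

/-- The integral of the regularized Bermúdez absorption function
`σ_{B_k}(x) = σ₀ β_k(x − L*)` over the layer `[L, L*)`, `L* = L + δ`, diverges. -/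
theorem bermudez_integral_diverges (σ₀ δ L : ℝ) (hσ₀ : 0 < σ₀) (hδ : 0 < δ)
    (k : ℤ) (hk : -1 ≤ k) :
    ∫⁻ x in Set.Ico L (L + δ), ENNReal.ofReal (σ₀ * betak δ k (x - (L + δ))) = ⊤ := by
  set b := L + δ with hb
  set n := (k + 1).toNat with hn
  set c : ℕ → ℝ := fun j => (1 / (Nat.factorial j : ℝ)) * iteratedDeriv j betam1 (-δ) with hcdef
  set M : ℝ := ∑ j ∈ Finset.range n, |c j| * δ ^ j with hM
  have hM0 : 0 ≤ M :=
    Finset.sum_nonneg fun j _ => mul_nonneg (abs_nonneg _) (pow_nonneg hδ.le _)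
  -- bound on the polynomial part
  have hpoly : ∀ z ∈ Set.Icc (-δ) (0 : ℝ),
      |∑ j ∈ Finset.range n, c j * (z + δ) ^ j| ≤ M := by
    intro z hz
    calc |∑ j ∈ Finset.range n, c j * (z + δ) ^ j|
        ≤ ∑ j ∈ Finset.range n, |c j * (z + δ) ^ j| := Finset.abs_sum_le_sum_abs _ _
      _ ≤ M := by
          apply Finset.sum_le_sum
          intro j _
          rw [abs_mul, abs_pow]
          refine mul_le_mul_of_nonneg_left (pow_le_pow_left₀ (abs_nonneg _) ?_ j) (abs_nonneg _)
          rw [abs_le]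
          constructor
          · linarith [hz.1, hz.2]
          · linarith [hz.1, hz.2]
  set ε : ℝ := min δ (1 / (2 * (M + 1))) with hε
  have hε0 : 0 < ε := lt_min hδ (by positivity)
  have hεδ : ε ≤ δ := min_le_left _ _
  have hεM : ε ≤ 1 / (2 * (M + 1)) := min_le_right _ _
  set a : ℝ := b - ε with ha
  have hab : a < b := by simp [ha]; linarith
  have hsub : Set.Ioo a b ⊆ Set.Ico L b := by
    intro x hx
    constructor
    · have : L ≤ a := by simp [ha, hb]; linarith
      linarith [hx.1]
    · exact hx.2
  -- pointwise bound on Ioo a b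
  have hpt : ∀ x ∈ Set.Ioo a b,
      ENNReal.ofReal (σ₀ / 2 * (b - x)⁻¹) ≤ ENNReal.ofReal (σ₀ * betak δ k (x - b)) := by
    intro x hx
    apply ENNReal.ofReal_le_ofReal
    have hbx : 0 < b - x := by linarith [hx.2]
    have hbxε : b - x < ε := by linarith [hx.1]
    have hinv : 2 * (M + 1) ≤ (b - x)⁻¹ := by
      have h1 : ε⁻¹ ≤ (b - x)⁻¹ := by
        have := one_div_le_one_div_of_le hbx hbxε.le
        rwa [one_div, one_div] at this
      have h2 : (2 * (M + 1)) ≤ ε⁻¹ := by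
        rw [← one_div]
        rw [le_div_iff₀ hε0]
        calc 2 * (M + 1) * ε ≤ 2 * (M + 1) * (1 / (2 * (M + 1))) := by
              apply mul_le_mul_of_nonneg_left hεM (by positivity)
          _ = 1 := by field_simp
      linarith
    have hzIcc : x - b ∈ Set.Icc (-δ) (0 : ℝ) := by
      constructor <;> [skip; linarith [hx.2]]
      have : a ≤ x := hx.1.le
      have : b - δ ≤ a := by simp [ha]; linarith
      linarith
    have hS := hpoly (x - b) hzIcc
    have hbeta : betak δ k (x - b) = (b - x)⁻¹ - ∑ j ∈ Finset.range n, c j * (x - b + δ) ^ j := by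
      simp only [betak, hn, hcdef]
      congr 1
      rw [div_eq_mul_inv, neg_one_mul, ← inv_neg, neg_sub]
    rw [hbeta]
    have hSle : ∑ j ∈ Finset.range n, c j * (x - b + δ) ^ j ≤ M :=
      (le_abs_self _).trans hS
    have hM2 : M ≤ (b - x)⁻¹ / 2 := by linarith
    nlinarith [hσ₀.le, hbx, inv_pos.2 hbx]
  have htop : ∫⁻ x in Set.Ioo a b, ENNReal.ofReal (σ₀ / 2 * (b - x)⁻¹) = ⊤ :=
    aux_lintegral_inv_top a b (σ₀ / 2) hab (by positivity)
  rw [← top_le_iff, ← htop]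
  calc ∫⁻ x in Set.Ioo a b, ENNReal.ofReal (σ₀ / 2 * (b - x)⁻¹)
      ≤ ∫⁻ x in Set.Ioo a b, ENNReal.ofReal (σ₀ * betak δ k (x - b)) :=
        setLIntegral_mono' measurableSet_Ioo hpt
    _ ≤ ∫⁻ x in Set.Ico L b, ENNReal.ofReal (σ₀ * betak δ k (x - b)) :=
        lintegral_mono_set hsub
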